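/- Let g and h be nonzero 0/±1 vectors on the edges of a simple graph G such that the vertex sets spanned by supp(g) and supp(h) are disjoint, g has only negative entries, and h has only positive entries. Then z = g + h is a circuit of the rank-inequality system (Rank): any nonzero y with supp(By) ⊊ supp(Bz) is a scalar multiple of z, which is impossible. -/

import Mathlib

/-- The row of the rank-inequality matrix indexed by `U ⊆ V`, applied to `g`:
`∑_{e ∈ E(G[U])} g(e)`. -/
def rowSum {V : Type*} [Fintype V] [DecidableEq V] (G : SimpleGraph V) [DecidableRel G.Adj]
    (g : G.edgeSet → ℝ) (U : Finset V) : ℝ :=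
  ∑ e : G.edgeSet, if ∀ v ∈ (e : Sym2 V), v ∈ U then g e else 0

/-- The support of `B g` for the rank-inequality matrix `B`: the nonempty sets `U` whose
rank row evaluates to a nonzero value on `g`. -/
def Bsupp {V : Type*} [Fintype V] [DecidableEq V] (G : SimpleGraph V) [DecidableRel G.Adj]
    (g : G.edgeSet → ℝ) : Set (Finset V) :=
  {U | U.Nonempty ∧ rowSum G g U ≠ 0}

/-- A circuit of the rank-inequality system: a nonzero vector `g` such that `B g` is
support-minimal over `{B x : x ≠ 0}`. -/
def IsCircuit {V : Type*} [Fintype V] [DecidableEq V] (G : SimpleGraph V) [DecidableRel G.Adj]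
    (g : G.edgeSet → ℝ) : Prop :=
  g ≠ 0 ∧ ∀ y : G.edgeSet → ℝ, y ≠ 0 → ¬ Bsupp G y ⊂ Bsupp G g

/-- The unit vector supported on the edge `e`. -/
def unitVec {V : Type*} [DecidableEq V] (G : SimpleGraph V) (e : G.edgeSet) :
    G.edgeSet → ℝ :=
  fun f => if f = e then 1 else 0

/-- The spanning subgraph of `G` with edge set `R`. -/
def edgeSub {V : Type*} (G : SimpleGraph V) (R : Set G.edgeSet) : SimpleGraph V where
  Adj u v := u ≠ v ∧ ∃ e ∈ R, (e : Sym2 V) = s(u, v)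
  symm := by
    refine ⟨?_⟩
    rintro u v ⟨huv, e, heR, he⟩
    exact ⟨huv.symm, e, heR, by rw [he, Sym2.eq_swap]⟩
  loopless := ⟨by rintro v ⟨hv, _⟩; exact hv rfl⟩

/-! The row of `B` indexed by the two ends of an edge `e` reads off `y e`, so
`supp (B y) ⊆ supp (B z)` forces `supp y ⊆ supp z`. For a `-1`-edge `e` and a `+1`-edge `f`
of `z`, vertex-disjointness makes `e` and `f` the only edges of `supp z` spanned by their four
ends, so that row vanishes on `z`, hence on `y`, giving `y e = -y f`. Thus `y` is a nonzero
multiple of `z`, and then `B y` and `B z` have the same support. -/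

theorem SimpleGraph.edgeSet_eq_of_forall_mem {V : Type*} {G : SimpleGraph V} {e f : G.edgeSet}
    (h : ∀ v ∈ (f : Sym2 V), v ∈ (e : Sym2 V)) : f = e := by
  obtain ⟨f, hf⟩ := f
  induction f using Sym2.ind with
  | h a b =>
    have hab : a ≠ b := G.ne_of_adj (G.mem_edgeSet.mp hf)
    exact Subtype.ext <| Sym2.eq_of_ne_mem hab (Sym2.mem_mk_left a b) (Sym2.mem_mk_right a b)
      (h a (Sym2.mem_mk_left a b)) (h b (Sym2.mem_mk_right a b))

theorem eq_smul_of_forall_add_eq_zero {α : Type*} {y z : α → ℝ}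
    (hz : ∀ a, z a = 0 ∨ z a = -1 ∨ z a = 1) (hsupp : ∀ a, z a = 0 → y a = 0)
    (hpair : ∀ a b, z a = -1 → z b = 1 → y a + y b = 0) {a₀ b₀ : α}
    (ha₀ : z a₀ = -1) (hb₀ : z b₀ = 1) : y = y b₀ • z := by
  funext a
  rcases hz a with h | h | h
  · simp [h, hsupp a h]
  · have := hpair a b₀ h hb₀
    simp only [Pi.smul_apply, h, smul_eq_mul]
    linarith
  · have := hpair a₀ a ha₀ h
    have := hpair a₀ b₀ ha₀ hb₀
    simp only [Pi.smul_apply, h, smul_eq_mul]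
    linarith

section RankInequality

variable {V : Type*} [Fintype V] [DecidableEq V] {G : SimpleGraph V} [DecidableRel G.Adj]

theorem rowSum_eq_sum_of_induced (x : G.edgeSet → ℝ) {U : Finset V} (S : Finset G.edgeSet)
    (hS : ∀ e ∈ S, ∀ v ∈ (e : Sym2 V), v ∈ U)
    (hout : ∀ e ∉ S, x e ≠ 0 → ¬ ∀ v ∈ (e : Sym2 V), v ∈ U) :
    rowSum G x U = ∑ e ∈ S, x e := by
  unfold rowSum
  rw [← Finset.sum_subset (Finset.subset_univ S)]
  · exact Finset.sum_congr rfl fun e he => if_pos (hS e he)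
  · intro e _ he
    by_cases hx : x e = 0
    · simp [hx]
    · exact if_neg (hout e he hx)

theorem rowSum_empty (x : G.edgeSet → ℝ) : rowSum G x ∅ = 0 :=
  Finset.sum_eq_zero fun e _ =>
    if_neg fun h => Finset.notMem_empty _ (h _ (Sym2.out_fst_mem (e : Sym2 V)))

theorem rowSum_smul (c : ℝ) (x : G.edgeSet → ℝ) (U : Finset V) :
    rowSum G (c • x) U = c * rowSum G x U := by
  unfold rowSum
  rw [Finset.mul_sum]
  refine Finset.sum_congr rfl fun e _ => ?_
  split_ifs <;> simp

theorem mem_Bsupp_iff {x : G.edgeSet → ℝ} {U : Finset V} : U ∈ Bsupp G x ↔ rowSum G x U ≠ 0 := by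
  refine ⟨And.right, fun hU => ⟨Finset.nonempty_iff_ne_empty.2 ?_, hU⟩⟩
  rintro rfl
  exact hU (rowSum_empty x)

theorem Bsupp_smul {c : ℝ} (hc : c ≠ 0) (x : G.edgeSet → ℝ) : Bsupp G (c • x) = Bsupp G x := by
  ext U
  simp [mem_Bsupp_iff, rowSum_smul, hc]

theorem rowSum_eq_zero_of_Bsupp_subset {y z : G.edgeSet → ℝ} (hs : Bsupp G y ⊆ Bsupp G z)
    {U : Finset V} (hz : rowSum G z U = 0) : rowSum G y U = 0 := by
  by_contra hy
  exact mem_Bsupp_iff.1 (hs (mem_Bsupp_iff.2 hy)) hz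

theorem rowSum_filter_mem (x : G.edgeSet → ℝ) (e : G.edgeSet) :
    rowSum G x (Finset.univ.filter (· ∈ (e : Sym2 V))) = x e := by
  rw [rowSum_eq_sum_of_induced x {e}, Finset.sum_singleton]
  · simp
  · intro f hf _ hsub
    exact hf (Finset.mem_singleton.2 (SimpleGraph.edgeSet_eq_of_forall_mem fun v hv => by
      simpa using hsub v hv))

theorem rowSum_filter_mem_or_mem (x : G.edgeSet → ℝ) {e f : G.edgeSet} (hef : e ≠ f)
    (hind : ∀ w, x w ≠ 0 → (∀ v ∈ (w : Sym2 V), v ∈ (e : Sym2 V) ∨ v ∈ (f : Sym2 V)) →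
      w = e ∨ w = f) :
    rowSum G x (Finset.univ.filter fun v => v ∈ (e : Sym2 V) ∨ v ∈ (f : Sym2 V)) = x e + x f := by
  rw [rowSum_eq_sum_of_induced x {e, f}, Finset.sum_pair hef]
  · simp only [Finset.mem_insert, Finset.mem_singleton, Finset.mem_filter, Finset.mem_univ,
      true_and]
    rintro w (rfl | rfl) v hv
    exacts [Or.inl hv, Or.inr hv]
  · intro w hw hxw hsub
    simp only [Finset.mem_insert, Finset.mem_singleton] at hw
    exact hw (hind w hxw fun v hv => by simpa using hsub v hv)

theorem isCircuit_of_forall_induced_pair (z : G.edgeSet → ℝ)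
    (hz : ∀ e, z e = 0 ∨ z e = -1 ∨ z e = 1) (hneg : ∃ e, z e = -1) (hpos : ∃ f, z f = 1)
    (hind : ∀ e f, z e = -1 → z f = 1 → ∀ w, z w ≠ 0 →
      (∀ v ∈ (w : Sym2 V), v ∈ (e : Sym2 V) ∨ v ∈ (f : Sym2 V)) → w = e ∨ w = f) :
    IsCircuit G z := by
  obtain ⟨e₀, he₀⟩ := hneg
  obtain ⟨f₀, hf₀⟩ := hpos
  refine ⟨fun h0 => by simp [h0] at he₀, fun y hy hss => ?_⟩
  have hsupp : ∀ e, z e = 0 → y e = 0 := fun e hze => by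
    rw [← rowSum_filter_mem y e]
    exact rowSum_eq_zero_of_Bsupp_subset hss.subset (by rw [rowSum_filter_mem, hze])
  have hpair : ∀ e f, z e = -1 → z f = 1 → y e + y f = 0 := by
    intro e f he hf
    have hef : e ≠ f := by
      rintro rfl
      linarith
    rw [← rowSum_filter_mem_or_mem y hef fun w hyw => hind e f he hf w fun hzw => hyw (hsupp w hzw)]
    apply rowSum_eq_zero_of_Bsupp_subset hss.subset
    rw [rowSum_filter_mem_or_mem z hef (hind e f he hf), he, hf]
    norm_num
  have hyz := eq_smul_of_forall_add_eq_zero hz hsupp hpair he₀ hf₀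
  have hc : y f₀ ≠ 0 := fun h0 => hy (by rw [hyz, h0, zero_smul])
  exact hss.ne (by rw [hyz, Bsupp_smul hc])

end RankInequality

/-- Case 1 of the disconnected-circuits lemma: if `g` is a nonzero vector with entries
in {0, -1} and `h` a nonzero vector with entries in {0, 1} on the edges of `G`, whose
supports span disjoint vertex sets, then `g + h` is a circuit of the rank-inequality
system. -/
theorem stmt19 {V : Type*} [Fintype V] [DecidableEq V] (G : SimpleGraph V)
    [DecidableRel G.Adj] (g h : G.edgeSet → ℝ)
    (hg : g ≠ 0) (hh : h ≠ 0)
    (hgneg : ∀ e, g e = 0 ∨ g e = -1)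
    (hhpos : ∀ e, h e = 0 ∨ h e = 1)
    (hdisj : ∀ e f : G.edgeSet, g e ≠ 0 → h f ≠ 0 →
      ∀ w : V, w ∈ (e : Sym2 V) → w ∉ (f : Sym2 V)) :
    IsCircuit G (g + h) := by
  have hcases : ∀ e, (g e = 0 ∧ h e = 0) ∨ (g e = -1 ∧ h e = 0) ∨ (g e = 0 ∧ h e = 1) := by
    intro e
    rcases hgneg e with hg₀ | hg₁ <;> rcases hhpos e with hh₀ | hh₁
    · exact Or.inl ⟨hg₀, hh₀⟩
    · exact Or.inr (Or.inr ⟨hg₀, hh₁⟩)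
    · exact Or.inr (Or.inl ⟨hg₁, hh₀⟩)
    · exact (hdisj e e (by norm_num [hg₁]) (by norm_num [hh₁]) _ (Sym2.out_fst_mem _)
        (Sym2.out_fst_mem _)).elim
  have hneg : ∀ e, (g + h) e = -1 ↔ g e ≠ 0 := fun e => by
    rcases hcases e with ⟨h₁, h₂⟩ | ⟨h₁, h₂⟩ | ⟨h₁, h₂⟩ <;> norm_num [h₁, h₂]
  have hpos : ∀ e, (g + h) e = 1 ↔ h e ≠ 0 := fun e => by
    rcases hcases e with ⟨h₁, h₂⟩ | ⟨h₁, h₂⟩ | ⟨h₁, h₂⟩ <;> norm_num [h₁, h₂]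
  obtain ⟨e₀, he₀⟩ := Function.ne_iff.mp hg
  obtain ⟨f₀, hf₀⟩ := Function.ne_iff.mp hh
  refine isCircuit_of_forall_induced_pair (g + h)
    (fun e => by rcases hcases e with ⟨h₁, h₂⟩ | ⟨h₁, h₂⟩ | ⟨h₁, h₂⟩ <;> norm_num [h₁, h₂])
    ⟨e₀, (hneg e₀).2 he₀⟩ ⟨f₀, (hpos f₀).2 hf₀⟩ fun e f he hf w hw hsub => ?_
  rw [hneg] at he
  rw [hpos] at hf
  by_cases hgw : g w = 0
  · have hhw : h w ≠ 0 := by simpa [hgw] using hw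
    exact Or.inr <| SimpleGraph.edgeSet_eq_of_forall_mem fun v hv =>
      (hsub v hv).resolve_left fun hve => hdisj e w he hhw v hve hv
  · exact Or.inl <| SimpleGraph.edgeSet_eq_of_forall_mem fun v hv =>
      (hsub v hv).resolve_right (hdisj w f hgw hf v hv)
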